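/- Let n ≥ 3 and let f_{k,ℓ} = ((M')^{-1} N M')_{k,ℓ} as above, with k > ℓ+1. With respect to the lexicographic order on K[x_{i,j}] induced by x_{i,j} > x_{i',j'} iff i < i' or (i = i' and j < j'), the leading term of f_{k,ℓ} is −x_{n+1−k, ℓ+1}. -/

import Mathlib

/-!
Since `M' · (M')⁻¹ N M' = N M'` and row `n-1-j` of `M'` is
`(x_{n-1-j,0}, …, x_{n-1-j,j-1}, 1, 0, …, 0)`, the entries of `(M')⁻¹ N M'` satisfy
`f_{j,c} = (N M')_{n-1-j,c} - ∑_{t<j} x_{n-1-j,t} f_{t,c}` (0-indexed).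
By strong induction on `j`: `f_{j,c} = 0` for `j ≤ c`, `f_{c+1,c} = 1`, and for `j > c+1` the
term `t = c+1` contributes `-x_{n-1-j,c+1}`, while `(N M')_{n-1-j,c} = x_{n-j,c}` and the terms
`t > c+1` only involve indeterminates from later rows or further right in row `n-1-j`.
A polynomial `-x_v + g` with `g` in such smaller indeterminates has leading term `-x_v`.
-/

open MvPolynomial

/-- The generic antidiagonal-unipotent `n × n` matrix `M'` (the matrix `w₀M`):
indeterminates `x_{i,j}` above the antidiagonal, `1`'s on the antidiagonal,
`0`'s below. -/
noncomputable def genM (K : Type*) [Field K] (n : ℕ) :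
    Matrix (Fin n) (Fin n) (MvPolynomial (Fin n × Fin n) K) := fun i j =>
  if (i : ℕ) + (j : ℕ) < n - 1 then MvPolynomial.X (i, j)
  else if (i : ℕ) + (j : ℕ) = n - 1 then 1 else 0

/-- The regular nilpotent Jordan matrix `N`, with `1`'s on the superdiagonal. -/
noncomputable def nilpMat (K : Type*) [Field K] (n : ℕ) :
    Matrix (Fin n) (Fin n) (MvPolynomial (Fin n × Fin n) K) := fun i j =>
  if (j : ℕ) = (i : ℕ) + 1 then 1 else 0

/-- The matrix `(M')⁻¹ N M'`, whose `(k,ℓ)` entry is the polynomial `f_{k,ℓ}`. -/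
noncomputable def hessMat (K : Type*) [Field K] (n : ℕ) :
    Matrix (Fin n) (Fin n) (MvPolynomial (Fin n × Fin n) K) :=
  (genM K n)⁻¹ * nilpMat K n * genM K n

/-- The rank of the variable `x_{i,j}`: variables are ordered by rows then columns,
a smaller rank meaning a more significant (larger) variable.  This realizes the
ordering `x_{i,j} > x_{i',j'}` iff `i < i'`, or `i = i'` and `j < j'`. -/
def varRank (n : ℕ) (v : Fin n × Fin n) : ℕ := (v.1 : ℕ) * n + (v.2 : ℕ)

/-- The lexicographic order on monomials of `K[x_{i,j}]` induced by the variable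
ordering above: `m ≤ m'` iff `m = m'` or at the most significant variable where
they differ, `m` has the smaller exponent. -/
def lexLE (n : ℕ) (m m' : (Fin n × Fin n) →₀ ℕ) : Prop :=
  m = m' ∨ ∃ v, m v < m' v ∧ ∀ w, varRank n w < varRank n v → m w = m' w

/-- `m` is the leading monomial of `f` with respect to `le`. -/
def IsLeadMono {K : Type*} [Field K] {n : ℕ}
    (le : ((Fin n × Fin n) →₀ ℕ) → ((Fin n × Fin n) →₀ ℕ) → Prop)
    (f : MvPolynomial (Fin n × Fin n) K) (m : (Fin n × Fin n) →₀ ℕ) : Prop :=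
  m ∈ f.support ∧ ∀ m' ∈ f.support, le m' m

section

variable {K : Type*} [Field K] {n : ℕ}

lemma genM_apply_of_lt {i j : Fin n} (h : (i : ℕ) + j < n - 1) :
    genM K n i j = X (i, j) :=
  if_pos h

lemma genM_apply_of_eq {i j : Fin n} (h : (i : ℕ) + j = n - 1) : genM K n i j = 1 := by
  simp [genM, h]

lemma genM_apply_of_gt {i j : Fin n} (h : n - 1 < (i : ℕ) + j) : genM K n i j = 0 := by
  simp [genM, show ¬ (i : ℕ) + j < n - 1 by omega, show (i : ℕ) + j ≠ n - 1 by omega]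

lemma genM_rev_apply (j t : Fin n) :
    genM K n j.rev t = if t < j then X (j.rev, t) else if t = j then 1 else 0 := by
  have hrev := Fin.val_rev j
  split_ifs with hlt heq
  · exact genM_apply_of_lt (by rw [Fin.lt_def] at hlt; omega)
  · exact genM_apply_of_eq (by subst heq; omega)
  · exact genM_apply_of_gt (by rw [Fin.lt_def, Fin.ext_iff] at *; omega)

lemma isUnit_det_genM : IsUnit (genM K n).det := by
  have hlower : ((genM K n).submatrix Fin.revPerm id).IsLowerTriangular := by
    intro i j hij
    simp [genM_rev_apply, (show i < j from hij).not_gt, (show i < j from hij).ne']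
  have hdet : ((genM K n).submatrix Fin.revPerm id).det = 1 := by
    rw [Matrix.det_of_isLowerTriangular _ hlower]
    exact Finset.prod_eq_one fun i _ => by simp [genM_rev_apply]
  rw [Matrix.det_permute] at hdet
  exact isUnit_of_mul_isUnit_right (hdet ▸ isUnit_one)

lemma genM_mul_hessMat : genM K n * hessMat K n = nilpMat K n * genM K n := by
  rw [hessMat, ← Matrix.mul_assoc, ← Matrix.mul_assoc,
    Matrix.mul_nonsing_inv _ isUnit_det_genM, Matrix.one_mul]

lemma nilpMat_mul_apply (A : Matrix (Fin n) (Fin n) (MvPolynomial (Fin n × Fin n) K))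
    (i j : Fin n) :
    (nilpMat K n * A) i j = if h : (i : ℕ) + 1 < n then A ⟨i + 1, h⟩ j else 0 := by
  rw [Matrix.mul_apply]
  split_ifs with h
  · rw [Finset.sum_eq_single ⟨i + 1, h⟩]
    · simp [nilpMat]
    · intro t _ ht
      simp [nilpMat, Fin.ext_iff.not.mp ht]
    · simp
  · exact Finset.sum_eq_zero fun t _ => by simp [nilpMat, show (t : ℕ) ≠ i + 1 by omega]

lemma hessMat_apply (j c : Fin n) :
    hessMat K n j c = (nilpMat K n * genM K n) j.rev c
      - ∑ t ∈ Finset.univ.filter (· < j), X (j.rev, t) * hessMat K n t c := by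
  have hrow := congrFun (congrFun (genM_mul_hessMat (K := K) (n := n)) j.rev) c
  have hsplit (t : Fin n) : genM K n j.rev t * hessMat K n t c
      = (if t < j then X (j.rev, t) * hessMat K n t c else 0)
        + if t = j then hessMat K n t c else 0 := by
    rw [genM_rev_apply]
    split_ifs with hlt heq <;> simp_all
  rw [Matrix.mul_apply, Finset.sum_congr rfl fun t _ => hsplit t, Finset.sum_add_distrib,
    ← Finset.sum_filter, Finset.sum_ite_eq' Finset.univ j, if_pos (Finset.mem_univ j)] at hrow
  rw [← hrow]
  ring

lemma nilpMat_mul_genM_rev_apply_of_le {j c : Fin n} (h : j ≤ c) :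
    (nilpMat K n * genM K n) j.rev c = 0 := by
  have hrev := Fin.val_rev j
  rw [nilpMat_mul_apply]
  split_ifs
  · exact genM_apply_of_gt (by simp only; rw [Fin.le_def] at h; omega)
  · rfl

lemma nilpMat_mul_genM_rev_apply_of_eq {j c : Fin n} (h : (j : ℕ) = c + 1) :
    (nilpMat K n * genM K n) j.rev c = 1 := by
  have hrev := Fin.val_rev j
  rw [nilpMat_mul_apply, dif_pos (by omega)]
  exact genM_apply_of_eq (by simp only; omega)

lemma nilpMat_mul_genM_rev_apply_of_lt {j c : Fin n} (h : (c : ℕ) + 1 < j) :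
    (nilpMat K n * genM K n) j.rev c = X (⟨n - j, by omega⟩, c) := by
  have hrev := Fin.val_rev j
  rw [nilpMat_mul_apply, dif_pos (by omega)]
  have hrow : (⟨j.rev + 1, by omega⟩ : Fin n) = ⟨n - j, by omega⟩ := Fin.ext (by simp only; omega)
  rw [hrow]
  exact genM_apply_of_lt (by simp only; omega)

lemma hessMat_apply_eq_zero_of_le {j c : Fin n} (h : j ≤ c) : hessMat K n j c = 0 := by
  induction j using WellFoundedLT.induction with
  | _ j ih =>
    rw [hessMat_apply, nilpMat_mul_genM_rev_apply_of_le h, zero_sub, neg_eq_zero]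
    refine Finset.sum_eq_zero fun t ht => ?_
    have htj : t < j := (Finset.mem_filter.mp ht).2
    rw [ih t htj (htj.le.trans h), mul_zero]

lemma hessMat_apply_eq_one_of_eq {j c : Fin n} (h : (j : ℕ) = c + 1) : hessMat K n j c = 1 := by
  rw [hessMat_apply, nilpMat_mul_genM_rev_apply_of_eq h, sub_eq_self]
  refine Finset.sum_eq_zero fun t ht => ?_
  have htj : t < j := (Finset.mem_filter.mp ht).2
  rw [hessMat_apply_eq_zero_of_le (by rw [Fin.lt_def] at htj; rw [Fin.le_def]; omega), mul_zero]

lemma varRank_lt_of_fst_lt {v w : Fin n × Fin n} (h : v.1 < w.1) :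
    varRank n v < varRank n w := by
  have hv := v.2.isLt
  have hvw : ((v.1 : ℕ) + 1) * n ≤ w.1 * n := Nat.mul_le_mul_right n h
  simp only [varRank]
  nlinarith

lemma varRank_lt_of_snd_lt {v w : Fin n × Fin n} (h₁ : v.1 = w.1) (h₂ : v.2 < w.2) :
    varRank n v < varRank n w := by
  simp only [varRank, h₁]
  omega

/-- The indeterminates smaller than `x_v`: those of larger `varRank`. -/
def smallerVars (n : ℕ) (v : Fin n × Fin n) : Set (Fin n × Fin n) :=
  {w | varRank n v < varRank n w}

lemma isLeadMono_smul_X_add {v : Fin n × Fin n}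
    {g : MvPolynomial (Fin n × Fin n) K} (hg : g ∈ supported K (smallerVars n v))
    {c : K} (hc : c ≠ 0) :
    IsLeadMono (lexLE n) (c • X v + g) (Finsupp.single v 1) ∧
      coeff (Finsupp.single v 1) (c • X v + g) = c := by
  have hsmaller : ∀ m ∈ g.support, ∀ w, m w ≠ 0 → varRank n v < varRank n w := fun m hm w hw =>
    mem_supported.mp hg (mem_vars_iff_mem_support w |>.mpr ⟨m, hm, Finsupp.mem_support_iff.mpr hw⟩)
  have hg_coeff : coeff (Finsupp.single v 1) g = 0 := by
    by_contra hne
    exact lt_irrefl _ (hsmaller _ (mem_support_iff.mpr hne) v (by simp))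
  have hcoeff : coeff (Finsupp.single v 1) (c • X v + g) = c := by
    simp [hg_coeff]
  refine ⟨⟨mem_support_iff.mpr (by rwa [hcoeff]), fun m hm => ?_⟩, hcoeff⟩
  rcases Finset.mem_union.mp (support_add hm) with hmX | hmg
  · left
    have hmX' := support_smul hmX
    rwa [support_X, Finset.mem_singleton] at hmX'
  · have hzero : ∀ w, varRank n w ≤ varRank n v → m w = 0 := fun w hw =>
      by_contra fun hne => (hsmaller m hmg w hne).not_ge hw
    right
    refine ⟨v, by simp [hzero v le_rfl], fun w hw => ?_⟩
    rw [hzero w hw.le, Finsupp.single_eq_of_ne (by rintro rfl; exact lt_irrefl _ hw)]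

lemma hessMat_add_X_mem_supported {j c d : Fin n}
    (hd : (d : ℕ) = c + 1) (hdj : d < j) :
    hessMat K n j c + X (j.rev, d) ∈ supported K (smallerVars n (j.rev, d)) := by
  induction j using WellFoundedLT.induction with
  | _ j ih =>
    have hrevj := Fin.val_rev j
    rw [Fin.lt_def] at hdj
    have hterm : ∀ t ∈ Finset.univ.filter (· < j),
        X (j.rev, t) * hessMat K n t c - (if t = d then X (j.rev, d) else 0)
          ∈ supported K (smallerVars n (j.rev, d)) := by
      intro t ht
      have htj : t < j := (Finset.mem_filter.mp ht).2
      rcases lt_trichotomy t d with htd | rfl | hdt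
      · rw [hessMat_apply_eq_zero_of_le (by rw [Fin.lt_def] at htd; rw [Fin.le_def]; omega),
          if_neg htd.ne, mul_zero, sub_zero]
        exact zero_mem _
      · rw [hessMat_apply_eq_one_of_eq hd, if_pos rfl, mul_one, sub_self]
        exact zero_mem _
      · have hrev : j.rev < t.rev := Fin.rev_lt_rev.mpr htj
        have hXt : X (t.rev, d) ∈ supported K (smallerVars n (j.rev, d)) :=
          X_mem_supported.mpr (varRank_lt_of_fst_lt hrev)
        have hft : hessMat K n t c ∈ supported K (smallerVars n (j.rev, d)) := by
          have hmono : smallerVars n (t.rev, d) ⊆ smallerVars n (j.rev, d) :=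
            fun w hw => (varRank_lt_of_fst_lt hrev).trans hw
          simpa using sub_mem (supported_mono hmono (ih t htj hdt)) hXt
        rw [if_neg hdt.ne', sub_zero]
        exact mul_mem (X_mem_supported.mpr (varRank_lt_of_snd_lt rfl hdt)) hft
    have hX : X (⟨n - j, by omega⟩, c) ∈ supported K (smallerVars n (j.rev, d)) :=
      X_mem_supported.mpr (varRank_lt_of_fst_lt (by rw [Fin.lt_def]; simp only; omega))
    have hdiag : ∑ t ∈ Finset.univ.filter (· < j), (if t = d then X (j.rev, d) else 0)
        = (X (j.rev, d) : MvPolynomial (Fin n × Fin n) K) := by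
      rw [Finset.sum_ite_eq', if_pos (Finset.mem_filter.mpr ⟨Finset.mem_univ d, hdj⟩)]
    have hsplit : hessMat K n j c + X (j.rev, d) = X (⟨n - j, by omega⟩, c)
        - ∑ t ∈ Finset.univ.filter (· < j),
            (X (j.rev, t) * hessMat K n t c - if t = d then X (j.rev, d) else 0) := by
      rw [hessMat_apply j c, nilpMat_mul_genM_rev_apply_of_lt (by omega),
        Finset.sum_sub_distrib, hdiag]
      ring
    rw [hsplit]
    exact sub_mem hX (Subalgebra.sum_mem _ hterm)

end

/-- `k` and `l` are 1-indexed as in the paper; matrix indices and variables are 0-indexed. -/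
theorem stmt7 {K : Type*} [Field K] {n : ℕ}
    (k l : ℕ) (hl1 : 1 ≤ l) (hlk : l + 1 < k) (hkn : k ≤ n) :
    IsLeadMono (lexLE n) (hessMat K n ⟨k - 1, by omega⟩ ⟨l - 1, by omega⟩)
      (Finsupp.single ((⟨n - k, by omega⟩ : Fin n), (⟨l, by omega⟩ : Fin n)) 1) ∧
    MvPolynomial.coeff
      (Finsupp.single ((⟨n - k, by omega⟩ : Fin n), (⟨l, by omega⟩ : Fin n)) 1)
      (hessMat K n ⟨k - 1, by omega⟩ ⟨l - 1, by omega⟩) = -1 := by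
  have hrev : (⟨k - 1, by omega⟩ : Fin n).rev = ⟨n - k, by omega⟩ :=
    Fin.ext (by rw [Fin.val_rev]; show n - (k - 1 + 1) = n - k; omega)
  have hmem := hessMat_add_X_mem_supported (K := K) (n := n) (j := ⟨k - 1, by omega⟩)
    (c := ⟨l - 1, by omega⟩) (d := ⟨l, by omega⟩) (by simp only; omega)
    (by rw [Fin.lt_def]; simp only; omega)
  rw [hrev] at hmem
  have hlead := isLeadMono_smul_X_add hmem (neg_ne_zero.mpr one_ne_zero)
  rwa [neg_one_smul, neg_add_cancel_comm_assoc] at hlead
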